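/- The constant 1 in the pre-Schwarzian comparison is sharp: for h(z) = exp(z/(1-z)) and g(z) = exp(-z/(1-z))/(1-z), the log-harmonic mapping f = h·conj(g) has ‖P_f‖ = 5 and ‖P_{hg}‖ = 4, so |‖P_f‖ - ‖P_{hg}‖| = 1. -/

import Mathlib

/-!
With `q = 1/(1-z)` one has `h = exp (q - 1)`, `h g = q` and `ω = -z`, so that
`P_f = 3q - conj z/(1-|z|²)` and `P_{hg} = 2q`. Writing `u = conj(1-z)/(1-z)`, which is unimodular
and equals `1` on the real axis,
`(1-|z|²) P_f = 3u + 2 conj z` and `(1-|z|²) P_{hg} = 2 + 2zu`.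
Hence the weighted norms are bounded by `3 + 2|z|` and `2 + 2|z|`, with equality on `[0, 1)`,
and their suprema over the disk are `5` and `4`.
-/

open Complex Metric ComplexConjugate Filter Topology

theorem sSup_weighted_norm_eq {F : ℂ → ℂ} {a b : ℝ} (hb : 0 ≤ b)
    (hle : ∀ z : ℂ, ‖z‖ < 1 → (1 - ‖z‖ ^ 2) * ‖F z‖ ≤ a + b * ‖z‖)
    (heq : ∀ r : ℝ, 0 ≤ r → r < 1 → (1 - r ^ 2) * ‖F r‖ = a + b * r) :
    sSup {y : ℝ | ∃ z ∈ ball (0 : ℂ) 1, y = (1 - ‖z‖ ^ 2) * ‖F z‖} = a + b := by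
  refine csSup_eq_of_forall_le_of_forall_lt_exists_gt ⟨_, 0, mem_ball_self one_pos, rfl⟩ ?_ ?_
  · rintro _ ⟨z, hz, rfl⟩
    have hz1 : ‖z‖ < 1 := mem_ball_zero_iff.mp hz
    calc (1 - ‖z‖ ^ 2) * ‖F z‖ ≤ a + b * ‖z‖ := hle z hz1
      _ ≤ a + b := by nlinarith
  · intro w hw
    have hlim : Tendsto (fun r : ℝ => a + b * r) (𝓝[<] 1) (𝓝 (a + b * 1)) :=
      ((continuous_const.add (continuous_const.mul continuous_id)).tendsto 1).mono_left
        nhdsWithin_le_nhds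
    obtain ⟨r, hwr, hr0, hr1⟩ :=
      ((hlim.eventually_const_lt (by simpa using hw)).and (Ioo_mem_nhdsLT one_pos)).exists
    have hnorm : ‖(r : ℂ)‖ = r := Complex.norm_of_nonneg hr0.le
    refine ⟨_, ⟨r, by rwa [mem_ball_zero_iff, hnorm], rfl⟩, ?_⟩
    rwa [hnorm, heq r hr0.le hr1]

theorem one_sub_norm_sq_mul_norm {z w : ℂ} (hz : ‖z‖ < 1) :
    (1 - ‖z‖ ^ 2) * ‖w‖ = ‖((1 - ‖z‖ ^ 2 : ℝ) : ℂ) * w‖ := by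
  rw [norm_mul, norm_real, Real.norm_of_nonneg (by nlinarith [norm_nonneg z])]

theorem norm_conj_div_self {w : ℂ} (hw : w ≠ 0) : ‖conj w / w‖ = 1 := by
  rw [norm_div, norm_conj, div_self (norm_ne_zero_iff.mpr hw)]

theorem ne_one_of_norm_lt_one {z : ℂ} (hz : ‖z‖ < 1) : z ≠ 1 := by
  rintro rfl
  simp at hz

noncomputable def extremalH (z : ℂ) : ℂ := Complex.exp (z / (1 - z))

noncomputable def extremalG (z : ℂ) : ℂ := Complex.exp (-z / (1 - z)) / (1 - z)

noncomputable def dilatation (h g : ℂ → ℂ) (z : ℂ) : ℂ :=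
  deriv g z * h z / (deriv h z * g z)

noncomputable def logHarmonicPreSchwarzian (h g : ℂ → ℂ) (z : ℂ) : ℂ :=
  deriv (deriv h) z / deriv h z + deriv g z / g z -
    conj (dilatation h g z) * deriv (dilatation h g) z / (1 - (‖dilatation h g z‖ : ℂ) ^ 2)

noncomputable def preSchwarzian (F : ℂ → ℂ) (z : ℂ) : ℂ := deriv (deriv F) z / deriv F z

theorem extremalH_mul_extremalG (z : ℂ) : extremalH z * extremalG z = (1 - z)⁻¹ := by
  rw [extremalH, extremalG, mul_div_assoc', ← Complex.exp_add, neg_div, add_neg_cancel,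
    Complex.exp_zero, one_div]

theorem extremalH_ne_zero (z : ℂ) : extremalH z ≠ 0 := Complex.exp_ne_zero _

theorem extremalG_ne_zero {z : ℂ} (hz : z ≠ 1) : extremalG z ≠ 0 :=
  right_ne_zero_of_mul <| by
    rw [extremalH_mul_extremalG]
    exact inv_ne_zero (sub_ne_zero.mpr hz.symm)

section Extremal

variable {z : ℂ}

theorem hasDerivAt_inv_one_sub (hz : z ≠ 1) :
    HasDerivAt (fun w => (1 - w)⁻¹) ((1 - z)⁻¹ ^ 2) z := by
  have hz' : 1 - z ≠ 0 := sub_ne_zero.mpr hz.symm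
  refine (((hasDerivAt_id z).const_sub 1).inv hz').congr_deriv ?_
  field_simp
  simp [hz']

theorem hasDerivAt_inv_one_sub_sq (hz : z ≠ 1) :
    HasDerivAt (fun w => (1 - w)⁻¹ ^ 2) (2 * (1 - z)⁻¹ ^ 3) z := by
  refine ((hasDerivAt_inv_one_sub hz).pow 2).congr_deriv ?_
  push_cast
  ring

theorem hasDerivAt_extremalH (hz : z ≠ 1) :
    HasDerivAt extremalH (extremalH z * (1 - z)⁻¹ ^ 2) z := by
  have hz' : 1 - z ≠ 0 := sub_ne_zero.mpr hz.symm
  refine HasDerivAt.cexp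
    (((hasDerivAt_id z).div ((hasDerivAt_id z).const_sub 1) hz').congr_deriv ?_)
  field_simp
  simp [hz']

theorem deriv_extremalH (hz : z ≠ 1) : deriv extremalH z = extremalH z * (1 - z)⁻¹ ^ 2 :=
  (hasDerivAt_extremalH hz).deriv

theorem deriv_deriv_extremalH (hz : z ≠ 1) :
    deriv (deriv extremalH) z = extremalH z * ((1 - z)⁻¹ ^ 4 + 2 * (1 - z)⁻¹ ^ 3) := by
  have hloc : deriv extremalH =ᶠ[𝓝 z] fun w => extremalH w * (1 - w)⁻¹ ^ 2 :=
    (eventually_ne_nhds hz).mono fun w hw => deriv_extremalH hw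
  rw [hloc.deriv_eq]
  refine ((hasDerivAt_extremalH hz).mul (hasDerivAt_inv_one_sub_sq hz)).deriv.trans ?_
  ring

theorem deriv_extremalG (hz : z ≠ 1) :
    deriv extremalG z = extremalG z * ((1 - z)⁻¹ - (1 - z)⁻¹ ^ 2) := by
  have hG : extremalG = fun w => (1 - w)⁻¹ / extremalH w := by
    funext w
    rw [← extremalH_mul_extremalG, mul_div_cancel_left₀ _ (extremalH_ne_zero w)]
  rw [hG]
  refine ((hasDerivAt_inv_one_sub hz).div (hasDerivAt_extremalH hz)
    (extremalH_ne_zero z)).deriv.trans ?_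
  field_simp [extremalH_ne_zero z]

theorem dilatation_extremal (hz : z ≠ 1) : dilatation extremalH extremalG z = -z := by
  rw [dilatation, deriv_extremalG hz, deriv_extremalH hz]
  field_simp [extremalH_ne_zero z, extremalG_ne_zero hz]
  ring

theorem deriv_dilatation_extremal (hz : z ≠ 1) :
    deriv (dilatation extremalH extremalG) z = -1 := by
  have hloc : dilatation extremalH extremalG =ᶠ[𝓝 z] fun w => -w :=
    (eventually_ne_nhds hz).mono fun w hw => dilatation_extremal hw
  rw [hloc.deriv_eq, deriv_neg]


theorem logHarmonicPreSchwarzian_extremal (hz : z ≠ 1) :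
    logHarmonicPreSchwarzian extremalH extremalG z =
      3 * (1 - z)⁻¹ - conj z / (1 - (‖z‖ : ℂ) ^ 2) := by
  rw [logHarmonicPreSchwarzian, deriv_deriv_extremalH hz, deriv_extremalH hz, deriv_extremalG hz,
    dilatation_extremal hz, deriv_dilatation_extremal hz, norm_neg, map_neg]
  field_simp [extremalH_ne_zero z, extremalG_ne_zero hz]
  ring

theorem preSchwarzian_extremal (hz : z ≠ 1) :
    preSchwarzian (fun w => extremalH w * extremalG w) z = 2 * (1 - z)⁻¹ := by
  have hq : deriv (fun w : ℂ => (1 - w)⁻¹) =ᶠ[𝓝 z] fun w => (1 - w)⁻¹ ^ 2 :=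
    (eventually_ne_nhds hz).mono fun w hw => (hasDerivAt_inv_one_sub hw).deriv
  simp only [preSchwarzian, extremalH_mul_extremalG]
  rw [hq.deriv_eq, (hasDerivAt_inv_one_sub_sq hz).deriv, (hasDerivAt_inv_one_sub hz).deriv]
  field_simp

theorem one_sub_norm_sq_mul_logHarmonicPreSchwarzian_extremal (hz : ‖z‖ < 1) :
    ((1 - ‖z‖ ^ 2 : ℝ) : ℂ) * logHarmonicPreSchwarzian extremalH extremalG z =
      3 * (conj (1 - z) / (1 - z)) + 2 * conj z := by
  have hz' : 1 - z ≠ 0 := sub_ne_zero.mpr (ne_one_of_norm_lt_one hz).symm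
  have hρ : (1 : ℂ) - z * conj z ≠ 0 := by
    rw [mul_conj', ← ofReal_pow, ← ofReal_one, ← ofReal_sub, ofReal_ne_zero]
    nlinarith [norm_nonneg z]
  rw [logHarmonicPreSchwarzian_extremal (ne_one_of_norm_lt_one hz)]
  push_cast
  rw [← mul_conj', map_sub, map_one]
  field_simp
  ring

theorem one_sub_norm_sq_mul_preSchwarzian_extremal (hz : ‖z‖ < 1) :
    ((1 - ‖z‖ ^ 2 : ℝ) : ℂ) * preSchwarzian (fun w => extremalH w * extremalG w) z =
      2 + 2 * z * (conj (1 - z) / (1 - z)) := by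
  have hz' : 1 - z ≠ 0 := sub_ne_zero.mpr (ne_one_of_norm_lt_one hz).symm
  rw [preSchwarzian_extremal (ne_one_of_norm_lt_one hz)]
  push_cast
  rw [← mul_conj', map_sub, map_one]
  field_simp
  ring


theorem one_sub_norm_sq_mul_norm_logHarmonicPreSchwarzian_extremal_le (hz : ‖z‖ < 1) :
    (1 - ‖z‖ ^ 2) * ‖logHarmonicPreSchwarzian extremalH extremalG z‖ ≤
      3 + 2 * ‖z‖ := by
  have hz' : 1 - z ≠ 0 := sub_ne_zero.mpr (ne_one_of_norm_lt_one hz).symm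
  rw [one_sub_norm_sq_mul_norm hz, one_sub_norm_sq_mul_logHarmonicPreSchwarzian_extremal hz]
  calc _ ≤ ‖3 * (conj (1 - z) / (1 - z))‖ + ‖2 * conj z‖ := norm_add_le _ _
    _ = 3 + 2 * ‖z‖ := by
      rw [norm_mul, norm_mul, norm_conj_div_self hz', norm_conj]
      norm_num

theorem one_sub_norm_sq_mul_norm_preSchwarzian_extremal_le (hz : ‖z‖ < 1) :
    (1 - ‖z‖ ^ 2) * ‖preSchwarzian (fun w => extremalH w * extremalG w) z‖ ≤
      2 + 2 * ‖z‖ := by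
  have hz' : 1 - z ≠ 0 := sub_ne_zero.mpr (ne_one_of_norm_lt_one hz).symm
  rw [one_sub_norm_sq_mul_norm hz, one_sub_norm_sq_mul_preSchwarzian_extremal hz]
  calc _ ≤ ‖(2 : ℂ)‖ + ‖2 * z * (conj (1 - z) / (1 - z))‖ := norm_add_le _ _
    _ = 2 + 2 * ‖z‖ := by
      rw [norm_mul, norm_mul, norm_conj_div_self hz']
      norm_num

end Extremal

section RealAxis

variable {r : ℝ}

theorem one_sub_sq_mul_norm_logHarmonicPreSchwarzian_extremal_ofReal (hr0 : 0 ≤ r) (hr1 : r < 1) :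
    (1 - r ^ 2) * ‖logHarmonicPreSchwarzian extremalH extremalG r‖ = 3 + 2 * r := by
  have hnorm : ‖(r : ℂ)‖ = r := Complex.norm_of_nonneg hr0
  have hr : ‖(r : ℂ)‖ < 1 := hnorm.trans_lt hr1
  have hr' : (1 : ℂ) - r ≠ 0 := by exact_mod_cast (sub_pos.mpr hr1).ne'
  calc (1 - r ^ 2) * ‖logHarmonicPreSchwarzian extremalH extremalG r‖
      = (1 - ‖(r : ℂ)‖ ^ 2) * ‖logHarmonicPreSchwarzian extremalH extremalG r‖ := by
        rw [hnorm]
    _ = ‖((3 + 2 * r : ℝ) : ℂ)‖ := by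
        rw [one_sub_norm_sq_mul_norm hr,
          one_sub_norm_sq_mul_logHarmonicPreSchwarzian_extremal hr, map_sub, map_one,
          conj_ofReal, div_self hr']
        push_cast
        rw [mul_one]
    _ = 3 + 2 * r := Complex.norm_of_nonneg (by linarith)

theorem one_sub_sq_mul_norm_preSchwarzian_extremal_ofReal (hr0 : 0 ≤ r) (hr1 : r < 1) :
    (1 - r ^ 2) * ‖preSchwarzian (fun w => extremalH w * extremalG w) r‖ = 2 + 2 * r := by
  have hnorm : ‖(r : ℂ)‖ = r := Complex.norm_of_nonneg hr0
  have hr : ‖(r : ℂ)‖ < 1 := hnorm.trans_lt hr1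
  have hr' : (1 : ℂ) - r ≠ 0 := by exact_mod_cast (sub_pos.mpr hr1).ne'
  calc (1 - r ^ 2) * ‖preSchwarzian (fun w => extremalH w * extremalG w) r‖
      = (1 - ‖(r : ℂ)‖ ^ 2) * ‖preSchwarzian (fun w => extremalH w * extremalG w) r‖ := by
        rw [hnorm]
    _ = ‖((2 + 2 * r : ℝ) : ℂ)‖ := by
        rw [one_sub_norm_sq_mul_norm hr, one_sub_norm_sq_mul_preSchwarzian_extremal hr,
          map_sub, map_one, conj_ofReal, div_self hr']
        push_cast
        rw [mul_one]
    _ = 2 + 2 * r := Complex.norm_of_nonneg (by linarith)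

end RealAxis

theorem preSchwarzian_comparison_sharpness :
    let h : ℂ → ℂ := fun z => Complex.exp (z / (1 - z))
    let g : ℂ → ℂ := fun z => Complex.exp (-z / (1 - z)) / (1 - z)
    let ω : ℂ → ℂ := fun z => deriv g z * h z / (deriv h z * g z)
    let Pf : ℂ → ℂ := fun z =>
      deriv (deriv h) z / deriv h z + deriv g z / g z -
        conj (ω z) * deriv ω z / (1 - (‖ω z‖ : ℂ)^2)
    let Phg : ℂ → ℂ := fun z =>
      deriv (deriv (fun w => h w * g w)) z / deriv (fun w => h w * g w) z
    sSup {y : ℝ | ∃ z ∈ ball (0:ℂ) 1, y = (1 - ‖z‖^2) * ‖Pf z‖} = 5 ∧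
    sSup {y : ℝ | ∃ z ∈ ball (0:ℂ) 1, y = (1 - ‖z‖^2) * ‖Phg z‖} = 4 ∧
    |sSup {y : ℝ | ∃ z ∈ ball (0:ℂ) 1, y = (1 - ‖z‖^2) * ‖Pf z‖} -
      sSup {y : ℝ | ∃ z ∈ ball (0:ℂ) 1, y = (1 - ‖z‖^2) * ‖Phg z‖}| = 1 := by
  intro h g ω Pf Phg
  have hPf := sSup_weighted_norm_eq (F := Pf) zero_le_two
    (fun _ => one_sub_norm_sq_mul_norm_logHarmonicPreSchwarzian_extremal_le)
    (fun _ => one_sub_sq_mul_norm_logHarmonicPreSchwarzian_extremal_ofReal)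
  have hPhg := sSup_weighted_norm_eq (F := Phg) zero_le_two
    (fun _ => one_sub_norm_sq_mul_norm_preSchwarzian_extremal_le)
    (fun _ => one_sub_sq_mul_norm_preSchwarzian_extremal_ofReal)
  refine ⟨hPf.trans (by norm_num), hPhg.trans (by norm_num), ?_⟩
  rw [hPf, hPhg]
  norm_num
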